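/- arXiv:2604.21669 — 3 statements merged into one kernel-verified Lean document; each statement's English description precedes it below -/
import Mathlib

section
/- Let Ω be a countable set, μ, μ' probability measures on Ω, and A ⊆ Ω with μ(A) ≥ δ and μ'(A) ≥ δ for some δ > 0. If d_TV(μ, μ') ≤ ε, then d_TV(μ(·|A), μ'(·|A)) ≤ ε(1/δ + 1/δ²). -/
/-- Total variation distance between two discrete (sub)probability vectors on `Ω`,
defined as the supremum over events `A ⊆ Ω` of `|μ(A) − ν(A)|`. -/
noncomputable def dTV {Ω : Type*} (μ ν : Ω → ℝ) : ℝ :=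
  ⨆ A : Set Ω, |(∑' ω : A, μ ω) - (∑' ω : A, ν ω)|

/-- The conditional measure `μ(·|A)`, `μ(B|A) = μ(A ∩ B)/μ(A)`, as a density. -/
noncomputable def condMeasure {Ω : Type*} (μ : Ω → ℝ) (A : Set Ω) : Ω → ℝ :=
  A.indicator fun ω => μ ω / ∑' a : A, μ a

/-- If `d_TV(μ, μ') ≤ ε` and `μ(A), μ'(A) ≥ δ > 0`, then
`d_TV(μ(·|A), μ'(·|A)) ≤ ε (1/δ + 1/δ²)`. -/
theorem dTV_cond_le {Ω : Type*} [Countable Ω]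
    (μ μ' : Ω → ℝ) (A : Set Ω) (ε δ : ℝ) (hδ : 0 < δ)
    (hμ0 : ∀ ω, 0 ≤ μ ω) (hμ1 : HasSum μ 1)
    (hμ'0 : ∀ ω, 0 ≤ μ' ω) (hμ'1 : HasSum μ' 1)
    (hA : δ ≤ ∑' a : A, μ a) (hA' : δ ≤ ∑' a : A, μ' a)
    (h : dTV μ μ' ≤ ε) :
    dTV (condMeasure μ A) (condMeasure μ' A) ≤ ε * (1 / δ + 1 / δ ^ 2) := by
  have hμs : Summable μ := hμ1.summable
  have hμ's : Summable μ' := hμ'1.summable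
  have hm0 : (0:ℝ) < ∑' a : A, μ a := lt_of_lt_of_le hδ hA
  have hm'0 : (0:ℝ) < ∑' a : A, μ' a := lt_of_lt_of_le hδ hA'
  have sub_nn : ∀ (f : Ω → ℝ), (∀ ω, 0 ≤ f ω) → ∀ s : Set Ω, (0:ℝ) ≤ ∑' x : s, f x :=
    fun f hf s => tsum_nonneg fun x => hf x
  have sub_le_one : ∀ (f : Ω → ℝ), (∀ ω, 0 ≤ f ω) → HasSum f 1 → ∀ s : Set Ω,
      (∑' x : s, f x) ≤ 1 := by
    intro f hf h1 s
    have := Summable.tsum_le_tsum_of_inj (Subtype.val : s → Ω) Subtype.val_injective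
      (fun c _ => hf c) (fun b => le_refl (f b)) (h1.summable.subtype s) h1.summable
    simpa [h1.tsum_eq] using this
  have hbdd : BddAbove (Set.range fun B : Set Ω => |(∑' ω : B, μ ω) - ∑' ω : B, μ' ω|) := by
    refine ⟨1, ?_⟩
    rintro x ⟨B, rfl⟩
    rw [abs_sub_le_iff]
    constructor
    · linarith [sub_le_one μ hμ0 hμ1 B, sub_nn μ' hμ'0 B]
    · linarith [sub_le_one μ' hμ'0 hμ'1 B, sub_nn μ hμ0 B]
  have hdiff : ∀ B : Set Ω, |(∑' ω : B, μ ω) - ∑' ω : B, μ' ω| ≤ ε := by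
    intro B
    refine le_trans ?_ h
    unfold dTV
    exact le_ciSup hbdd B
  have hε : 0 ≤ ε := le_trans (abs_nonneg _) (hdiff ∅)
  have key : ∀ (f : Ω → ℝ), ∀ B : Set Ω,
      (∑' ω : B, condMeasure f A ω) = (∑' ω : ↥(A ∩ B), f ω) / (∑' a : A, f a) := by
    intro f B
    calc ∑' ω : B, condMeasure f A ω
        = ∑' ω, B.indicator (A.indicator (fun ω => f ω / ∑' a : A, f a)) ω :=
          tsum_subtype _ _
      _ = ∑' ω, (A ∩ B).indicator (fun ω => f ω / ∑' a : A, f a) ω := by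
          rw [Set.indicator_indicator, Set.inter_comm]
      _ = ∑' ω : ↥(A ∩ B), f ω / ∑' a : A, f a := (tsum_subtype _ _).symm
      _ = (∑' ω : ↥(A ∩ B), f ω) / ∑' a : A, f a := tsum_div_const
  unfold dTV
  refine ciSup_le fun B => ?_
  rw [key μ B, key μ' B]
  set P := ∑' ω : ↥(A ∩ B), μ ω with hPdef
  set P' := ∑' ω : ↥(A ∩ B), μ' ω with hP'def
  set m := ∑' a : A, μ a with hmdef
  set m' := ∑' a : A, μ' a with hm'def
  have hP'le : P' ≤ 1 := sub_le_one μ' hμ'0 hμ'1 _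
  have hP'0 : 0 ≤ P' := sub_nn μ' hμ'0 _
  have h1 : |P - P'| ≤ ε := hdiff (A ∩ B)
  have h2 : |m - m'| ≤ ε := hdiff A
  have hmne : m ≠ 0 := ne_of_gt hm0
  have hm'ne : m' ≠ 0 := ne_of_gt hm'0
  have identity : P / m - P' / m' = (P - P') / m + P' * (m' - m) / (m * m') := by
    field_simp
    ring
  rw [identity]
  have b1 : |(P - P') / m| ≤ ε / δ := by
    rw [abs_div, abs_of_pos hm0]
    exact div_le_div₀ hε h1 hδ hA
  have b2 : |P' * (m' - m) / (m * m')| ≤ ε / (δ * δ) := by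
    rw [abs_div, abs_of_pos (mul_pos hm0 hm'0), abs_mul, abs_of_nonneg hP'0]
    calc P' * |m' - m| / (m * m') ≤ 1 * ε / (δ * δ) := by
          refine div_le_div₀ (by positivity)
            (mul_le_mul hP'le (by rwa [abs_sub_comm]) (abs_nonneg _) one_pos.le)
            (mul_pos hδ hδ) (mul_le_mul hA hA' hδ.le hm0.le)
      _ = ε / (δ * δ) := by ring
  calc |(P - P') / m + P' * (m' - m) / (m * m')|
      ≤ |(P - P') / m| + |P' * (m' - m) / (m * m')| := abs_add_le _ _
    _ ≤ ε / δ + ε / (δ * δ) := add_le_add b1 b2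
    _ = ε * (1 / δ + 1 / δ ^ 2) := by field_simp
end

section
/- Let μ > 0 and c, c' > 0, and suppose a nonnegative sequence satisfies P(|T_k − kμ| ≥ R) ≤ 2e^{−cR²/k} for R ≤ ρk and ≤ e^{−c'R} for R > ρk, where T_k is nondecreasing in k with T_k ≥ k. Then there exist C, c'' > 0 such that for every n and α' ∈ (1/2, 2/3), P(∃ k ∉ [n/μ − n^{α'}, n/μ + n^{α'}] : T_k = n) ≤ C e^{−c'' n^{2α'−1}}. -/
open MeasureTheory

/-- Renewal-time localisation: if `(T_k)` is nondecreasing with `T_k ≥ k` and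
satisfies the Gaussian/exponential large-deviation dichotomy around `kμ`, then
there are `C, c'' > 0` such that for all `n` and `α' ∈ (1/2, 2/3)`, the
probability that `T_k = n` for some `k ∉ [n/μ − n^{α'}, n/μ + n^{α'}]` is at
most `C e^{−c'' n^{2α'−1}}`. -/
theorem renewal_time_localisation
    {Ω : Type*} [MeasurableSpace Ω] (P : Measure Ω) [IsProbabilityMeasure P]
    (T : ℕ → Ω → ℝ) (hmeas : ∀ k, Measurable (T k))
    (μ : ℝ) (hμ : 0 < μ) (ρ c c' : ℝ) (hρ : 0 < ρ) (hc : 0 < c) (hc' : 0 < c')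
    (hmono : ∀ ω, ∀ k l : ℕ, k ≤ l → T k ω ≤ T l ω)
    (hlb : ∀ ω, ∀ k : ℕ, (k : ℝ) ≤ T k ω)
    (htail1 : ∀ k : ℕ, 1 ≤ k → ∀ R : ℝ, 0 < R → R ≤ ρ * k →
      (P {ω | R ≤ |T k ω - k * μ|}).toReal ≤ 2 * Real.exp (-c * R ^ 2 / k))
    (htail2 : ∀ k : ℕ, 1 ≤ k → ∀ R : ℝ, ρ * k < R →
      (P {ω | R ≤ |T k ω - k * μ|}).toReal ≤ Real.exp (-c' * R)) :
    ∃ C > (0 : ℝ), ∃ c'' > (0 : ℝ), ∀ n : ℕ, ∀ α' : ℝ, 1 / 2 < α' → α' < 2 / 3 →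
      (P {ω | ∃ k : ℕ, 1 ≤ k ∧
          ((k : ℝ) < n / μ - (n : ℝ) ^ α' ∨ n / μ + (n : ℝ) ^ α' < k) ∧
          T k ω = n}).toReal
        ≤ C * Real.exp (-c'' * (n : ℝ) ^ (2 * α' - 1)) := by
  have hD : (0:ℝ) < 1/μ + 2 := by positivity
  refine ⟨4, by norm_num, min (c*μ^2/(1/μ+2)) (c'*μ),
    lt_min (by positivity) (by positivity), ?_⟩
  set c'' := min (c*μ^2/(1/μ+2)) (c'*μ) with hc''def
  have hc''pos : 0 < c'' := lt_min (by positivity) (by positivity)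
  intro n α' hα1 hα2
  rcases Nat.eq_zero_or_pos n with hn0 | hn
  · subst hn0
    have hE : {ω | ∃ k : ℕ, 1 ≤ k ∧
        ((k : ℝ) < (0:ℕ) / μ - ((0:ℕ) : ℝ) ^ α' ∨ (0:ℕ) / μ + ((0:ℕ) : ℝ) ^ α' < k) ∧
        T k ω = (0:ℕ)} = ∅ := by
      ext ω
      simp only [Set.mem_setOf_eq, Set.mem_empty_iff_false, iff_false]
      rintro ⟨k, hk1, _, hTk⟩
      have h1 := hlb ω k
      have h2 : (1:ℝ) ≤ (k:ℝ) := by exact_mod_cast hk1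
      rw [hTk] at h1
      norm_num at h1
      linarith
    rw [hE]
    simp only [measure_empty, ENNReal.toReal_zero]
    positivity
  · have hx : (0:ℝ) < (n:ℝ) := by exact_mod_cast hn
    have h1x : (1:ℝ) ≤ (n:ℝ) := by exact_mod_cast hn
    have hpa : (0:ℝ) < (n:ℝ)^α' := Real.rpow_pos_of_pos hx α'
    have hnn : (0:ℝ) < (n:ℝ)^(2*α'-1) := Real.rpow_pos_of_pos hx _
    set R := μ * (n:ℝ)^α' with hRdef
    have hR : 0 < R := by positivity
    have hsq : ((n:ℝ)^α')^2 = (n:ℝ)^(2*α') := by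
      rw [sq, ← Real.rpow_add hx]; ring_nf
    have hkey : (n:ℝ)^(2*α') = (n:ℝ)^(2*α'-1) * (n:ℝ) := by
      nth_rewrite 3 [← Real.rpow_one (n:ℝ)]
      rw [← Real.rpow_add hx]; ring_nf
    have hmono_exp : (n:ℝ)^(2*α'-1) ≤ (n:ℝ)^α' :=
      Real.rpow_le_rpow_of_exponent_le h1x (by linarith)
    have hna : (n:ℝ)^α' ≤ (n:ℝ) := by
      calc (n:ℝ)^α' ≤ (n:ℝ)^(1:ℝ) :=
            Real.rpow_le_rpow_of_exponent_le h1x (by linarith)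
        _ = (n:ℝ) := Real.rpow_one _
    have hdiv : (n:ℝ)/μ = (1/μ)*(n:ℝ) := by ring
    -- the single-index tail bound
    have tail : ∀ m : ℕ, 1 ≤ m → (m:ℝ) ≤ (1/μ+2) * (n:ℝ) →
        (P {ω | R ≤ |T m ω - m*μ|}).toReal
          ≤ 2 * Real.exp (-c'' * (n:ℝ)^(2*α'-1)) := by
      intro m hm hmn
      have hmR : (0:ℝ) < (m:ℝ) := by exact_mod_cast hm
      rcases le_or_gt R (ρ * m) with hcase | hcase
      · have h1 := htail1 m hm R hR hcase
        refine h1.trans ?_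
        have hexp : -c * R^2 / m ≤ -c'' * (n:ℝ)^(2*α'-1) := by
          rw [div_le_iff₀ hmR]
          have hR2 : R^2 = μ^2 * ((n:ℝ)^(2*α'-1) * (n:ℝ)) := by
            rw [hRdef, mul_pow, hsq, hkey]
          have hmin1 : c'' * (1/μ+2) ≤ c*μ^2 := by
            have := min_le_left (c*μ^2/(1/μ+2)) (c'*μ)
            rw [← hc''def] at this
            calc c'' * (1/μ+2) ≤ (c*μ^2/(1/μ+2)) * (1/μ+2) :=
                  mul_le_mul_of_nonneg_right this (le_of_lt hD)
              _ = c*μ^2 := by field_simp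
          have key : c'' * (n:ℝ)^(2*α'-1) * m ≤ c * R^2 := by
            rw [hR2]
            have step1 : c'' * (n:ℝ)^(2*α'-1) * m
                ≤ c'' * (n:ℝ)^(2*α'-1) * ((1/μ+2)*(n:ℝ)) := by
              apply mul_le_mul_of_nonneg_left hmn
              positivity
            have step2 : c'' * (n:ℝ)^(2*α'-1) * ((1/μ+2)*(n:ℝ))
                = (c'' * (1/μ+2)) * ((n:ℝ)^(2*α'-1) * (n:ℝ)) := by ring
            have step3 : (c'' * (1/μ+2)) * ((n:ℝ)^(2*α'-1) * (n:ℝ))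
                ≤ (c*μ^2) * ((n:ℝ)^(2*α'-1) * (n:ℝ)) := by
              apply mul_le_mul_of_nonneg_right hmin1
              positivity
            calc c'' * (n:ℝ)^(2*α'-1) * m
                ≤ (c'' * (1/μ+2)) * ((n:ℝ)^(2*α'-1) * (n:ℝ)) := by
                  rw [← step2]; exact step1
              _ ≤ (c*μ^2) * ((n:ℝ)^(2*α'-1) * (n:ℝ)) := step3
              _ = c * (μ^2 * ((n:ℝ)^(2*α'-1) * (n:ℝ))) := by ring
          linarith
        have := Real.exp_le_exp.mpr hexp
        linarith
      · have h2 := htail2 m hm R hcase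
        refine h2.trans ?_
        have hmin2 : c'' ≤ c' * μ := by
          rw [hc''def]; exact min_le_right _ _
        have hexp : -c' * R ≤ -c'' * (n:ℝ)^(2*α'-1) := by
          have h3 : c'' * (n:ℝ)^(2*α'-1) ≤ (c'*μ) * (n:ℝ)^(2*α'-1) :=
            mul_le_mul_of_nonneg_right hmin2 (le_of_lt hnn)
          have h4 : (c'*μ) * (n:ℝ)^(2*α'-1) ≤ (c'*μ) * (n:ℝ)^α' :=
            mul_le_mul_of_nonneg_left hmono_exp (by positivity)
          have h5 : -c' * R = -((c'*μ) * (n:ℝ)^α') := by rw [hRdef]; ring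
          linarith
        have h6 := Real.exp_le_exp.mpr hexp
        have h7 := Real.exp_pos (-c'' * (n:ℝ)^(2*α'-1))
        linarith
    set mlo := ⌊(n:ℝ)/μ - (n:ℝ)^α'⌋₊ with hmlodef
    set mhi := ⌈(n:ℝ)/μ + (n:ℝ)^α'⌉₊ with hmhidef
    set A := {ω | R ≤ |T mlo ω - mlo*μ|} with hAdef
    set B := {ω | R ≤ |T mhi ω - mhi*μ|} with hBdef
    have hmhi1 : 1 ≤ mhi := Nat.ceil_pos.mpr (by positivity)
    have hmhin : (mhi:ℝ) ≤ (1/μ+2)*(n:ℝ) := by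
      have h := Nat.ceil_lt_add_one (show (0:ℝ) ≤ (n:ℝ)/μ + (n:ℝ)^α' by positivity)
      have : ((mhi:ℕ):ℝ) < (n:ℝ)/μ + (n:ℝ)^α' + 1 := h
      rw [hdiv] at this
      nlinarith
    have hB := tail mhi hmhi1 hmhin
    -- upper-branch inclusion
    have hBmem : ∀ ω, ∀ k : ℕ, (n:ℝ)/μ + (n:ℝ)^α' < k → T k ω = n → ω ∈ B := by
      intro ω k h hTk
      have hkm : mhi ≤ k := Nat.ceil_le.mpr (le_of_lt h)
      have hT : T mhi ω ≤ (n:ℝ) := by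
        have := hmono ω mhi k hkm
        rw [hTk] at this; exact this
      have hce : (n:ℝ)/μ + (n:ℝ)^α' ≤ (mhi:ℝ) := Nat.le_ceil _
      have hmul : (n:ℝ) + μ*(n:ℝ)^α' ≤ (mhi:ℝ)*μ := by
        have h1 := mul_le_mul_of_nonneg_right hce (le_of_lt hμ)
        have h2 : ((n:ℝ)/μ + (n:ℝ)^α')*μ = (n:ℝ) + μ*(n:ℝ)^α' := by
          field_simp
        linarith
      have : R ≤ (mhi:ℝ)*μ - T mhi ω := by rw [hRdef]; linarith
      show R ≤ |T mhi ω - mhi*μ|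
      rw [abs_sub_comm]
      exact this.trans (le_abs_self _)
    rcases Nat.eq_zero_or_pos mlo with h0 | hmlo1
    · -- only the upper branch is possible
      have hsub : {ω | ∃ k : ℕ, 1 ≤ k ∧
          ((k : ℝ) < n / μ - (n : ℝ) ^ α' ∨ n / μ + (n : ℝ) ^ α' < k) ∧
          T k ω = n} ⊆ B := by
        rintro ω ⟨k, hk1, hor, hTk⟩
        rcases hor with h | h
        · exfalso
          have : k ≤ mlo := Nat.le_floor (le_of_lt h)
          omega
        · exact hBmem ω k h hTk
      have h1 : (P {ω | ∃ k : ℕ, 1 ≤ k ∧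
          ((k : ℝ) < n / μ - (n : ℝ) ^ α' ∨ n / μ + (n : ℝ) ^ α' < k) ∧
          T k ω = n}).toReal ≤ (P B).toReal :=
        ENNReal.toReal_mono (measure_ne_top P B) (measure_mono hsub)
      have h8 := Real.exp_pos (-c'' * (n:ℝ)^(2*α'-1))
      linarith
    · have h0' : (0:ℝ) ≤ (n:ℝ)/μ - (n:ℝ)^α' := by
        by_contra hneg
        push_neg at hneg
        have : mlo = 0 := by
          rw [hmlodef]; exact Nat.floor_of_nonpos (le_of_lt hneg)
        omega
      have hmlon : (mlo:ℝ) ≤ (1/μ+2)*(n:ℝ) := by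
        have h1 : (mlo:ℝ) ≤ (n:ℝ)/μ - (n:ℝ)^α' := Nat.floor_le h0'
        rw [hdiv] at h1
        linarith
      have hA := tail mlo hmlo1 hmlon
      have hsub : {ω | ∃ k : ℕ, 1 ≤ k ∧
          ((k : ℝ) < n / μ - (n : ℝ) ^ α' ∨ n / μ + (n : ℝ) ^ α' < k) ∧
          T k ω = n} ⊆ A ∪ B := by
        rintro ω ⟨k, hk1, hor, hTk⟩
        rcases hor with h | h
        · left
          have hkm : k ≤ mlo := Nat.le_floor (le_of_lt h)
          have hfl : (mlo:ℝ) ≤ (n:ℝ)/μ - (n:ℝ)^α' := Nat.floor_le h0'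
          have hT : (n:ℝ) ≤ T mlo ω := by
            have := hmono ω k mlo hkm
            rw [hTk] at this; exact this
          have hmul : (mlo:ℝ)*μ ≤ (n:ℝ) - μ*(n:ℝ)^α' := by
            have h1 := mul_le_mul_of_nonneg_right hfl (le_of_lt hμ)
            have h2 : ((n:ℝ)/μ - (n:ℝ)^α')*μ = (n:ℝ) - μ*(n:ℝ)^α' := by
              field_simp
            linarith
          have : R ≤ T mlo ω - (mlo:ℝ)*μ := by rw [hRdef]; linarith
          exact this.trans (le_abs_self _)
        · right
          exact hBmem ω k h hTk
      have h1 : P {ω | ∃ k : ℕ, 1 ≤ k ∧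
          ((k : ℝ) < n / μ - (n : ℝ) ^ α' ∨ n / μ + (n : ℝ) ^ α' < k) ∧
          T k ω = n} ≤ P A + P B :=
        (measure_mono hsub).trans (measure_union_le _ _)
      have h2 : (P {ω | ∃ k : ℕ, 1 ≤ k ∧
          ((k : ℝ) < n / μ - (n : ℝ) ^ α' ∨ n / μ + (n : ℝ) ^ α' < k) ∧
          T k ω = n}).toReal ≤ (P A + P B).toReal :=
        ENNReal.toReal_mono
          (ENNReal.add_ne_top.mpr ⟨measure_ne_top P A, measure_ne_top P B⟩) h1
      rw [ENNReal.toReal_add (measure_ne_top P A) (measure_ne_top P B)] at h2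
      linarith
end

section
/- Let G = (V,E) be a finite graph, e = xy ∈ E, η ∈ {0,1}^{E\{e}}, and let C_x, C_y be the clusters of x and y in η. For p ∈ (0,1) and 1 ≤ q₁ ≤ q₂ ≤ q, the conditional probability qFK_{G;p,q}^{b₁,b₂;q₁,q₂}(ω(e)=1 | ω = η off e) equals p/(p + (1−p)Q), where Q = 1 if C_x = C_y; Q = q₁ if C_x ≠ C_y and both clusters intersect b₁; Q = q₂ if C_x ≠ C_y, one cluster misses b₁ but meets b₂ and the other meets b₁ ∪ b₂; and Q = q otherwise. In particular this conditional probability is monotone nondecreasing in η. -/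
/-! Write the cluster factor `q^{κ_i} q₁^{κ_{b₁}} q₂^{κ_{b₂}}` as a product over clusters of a
label weight: `q₁` for a cluster meeting `b₁`, `q₂` for one meeting `b₂` but not `b₁`, `q` otherwise.
Opening `e = xy` changes nothing if `C_x = C_y`, and otherwise merges `C_x` and `C_y` into one
cluster carrying the better of the two labels. Hence the weights with `e` closed and open differ
by the factor `(1-p) Q / p` with `Q = w(C_x) w(C_y) / w(C_x ∪ C_y)`. When `q₁ ≤ q₂ ≤ q`,
`Q = max (w C_x) (w C_y)`, and label weights can only decrease as clusters grow, so `Q` is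
antitone in `η`. -/

open scoped Classical

noncomputable section

variable {V : Type*} [Fintype V] [DecidableEq V]

/-- The graph of open edges of a percolation configuration `ω` on the graph `G`. -/
def openGraph (G : SimpleGraph V) (ω : Finset (Sym2 V)) : SimpleGraph V :=
  SimpleGraph.fromEdgeSet ((ω : Set (Sym2 V)) ∩ G.edgeSet)

/-- Number of clusters of `ω` intersecting `b`. -/
def kappaB (G : SimpleGraph V) (ω : Finset (Sym2 V)) (b : Set V) : ℕ :=
  Nat.card {C : (openGraph G ω).ConnectedComponent //
    ∃ v ∈ b, (openGraph G ω).connectedComponentMk v = C}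

/-- Number of clusters of `ω` intersecting `b₂` but not `b₁`. -/
def kappaB2 (G : SimpleGraph V) (ω : Finset (Sym2 V)) (b₁ b₂ : Set V) : ℕ :=
  Nat.card {C : (openGraph G ω).ConnectedComponent //
    (∃ v ∈ b₂, (openGraph G ω).connectedComponentMk v = C) ∧
    ¬∃ v ∈ b₁, (openGraph G ω).connectedComponentMk v = C}

/-- Number of clusters of `ω` intersecting neither `b₁` nor `b₂`. -/
def kappaI (G : SimpleGraph V) (ω : Finset (Sym2 V)) (b₁ b₂ : Set V) : ℕ :=
  Nat.card {C : (openGraph G ω).ConnectedComponent //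
    ¬∃ v ∈ b₁ ∪ b₂, (openGraph G ω).connectedComponentMk v = C}

/-- Unnormalised quasi-FK weight
`p^{|ω|} (1−p)^{|E∖ω|} q^{κ_i(ω)} q₁^{κ_{b₁}(ω)} q₂^{κ_{b₂}(ω)}`. -/
def qFKweight (G : SimpleGraph V) [DecidableRel G.Adj]
    (p q q₁ q₂ : ℝ) (b₁ b₂ : Set V) (ω : Finset (Sym2 V)) : ℝ :=
  p ^ (ω ∩ G.edgeFinset).card * (1 - p) ^ (G.edgeFinset \ ω).card *
    q ^ kappaI G ω b₁ b₂ * q₁ ^ kappaB G ω b₁ * q₂ ^ kappaB2 G ω b₁ b₂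

/-- The effective cluster-weight `Q` governing the conditional probability that
the edge `{x,y}` is open given the configuration `η` off that edge. -/
def Qval (G : SimpleGraph V) (q q₁ q₂ : ℝ) (b₁ b₂ : Set V)
    (η : Finset (Sym2 V)) (x y : V) : ℝ :=
  if (openGraph G η).Reachable x y then 1
  else if (∃ u ∈ b₁, (openGraph G η).Reachable x u) ∧
          (∃ u ∈ b₁, (openGraph G η).Reachable y u) then q₁
  else if ((¬∃ u ∈ b₁, (openGraph G η).Reachable x u) ∧
            (∃ u ∈ b₂, (openGraph G η).Reachable x u) ∧
            (∃ u ∈ b₁ ∪ b₂, (openGraph G η).Reachable y u)) ∨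
          ((¬∃ u ∈ b₁, (openGraph G η).Reachable y u) ∧
            (∃ u ∈ b₂, (openGraph G η).Reachable y u) ∧
            (∃ u ∈ b₁ ∪ b₂, (openGraph G η).Reachable x u)) then q₂
  else q

/-- The conditional probability that the edge `{x,y}` is open given that the
configuration agrees with `η` off this edge, for the quasi-FK measure. -/
def condOpenProb (G : SimpleGraph V) [DecidableRel G.Adj]
    (p q q₁ q₂ : ℝ) (b₁ b₂ : Set V) (η : Finset (Sym2 V)) (x y : V) : ℝ :=
  qFKweight G p q q₁ q₂ b₁ b₂ (insert s(x, y) η) /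
    (qFKweight G p q q₁ q₂ b₁ b₂ (insert s(x, y) η) + qFKweight G p q q₁ q₂ b₁ b₂ η)

end

theorem Finset.prod_eq_prod_mul_of_merge {ι κ M : Type*} [Fintype ι] [Fintype κ] [DecidableEq κ]
    [CommMonoid M] (φ : ι → κ) (hφ : Function.Surjective φ) {a b : ι} (hab : a ≠ b)
    (hfib : ∀ i, φ i = φ a ↔ i = a ∨ i = b)
    (hinj : ∀ i j, φ i ≠ φ a → φ i = φ j → i = j) {f : ι → M} {g : κ → M} {c : M}
    (hfg : ∀ i, φ i ≠ φ a → g (φ i) = f i) (hc : g (φ a) * c = f a * f b) :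
    ∏ i, f i = (∏ j, g j) * c := by
  classical
  have hfibre : ∀ j, ∏ i ∈ univ.filter (φ · = j), f i = Function.update g (φ a) (f a * f b) j := by
    intro j
    by_cases hj : j = φ a
    · subst hj
      have : univ.filter (φ · = φ a) = {a, b} := by ext i; simp [hfib]
      rw [this, prod_pair hab, Function.update_self]
    · obtain ⟨i, rfl⟩ := hφ j
      have : univ.filter (φ · = φ i) = {i} := by
        ext k; simp only [mem_filter, mem_univ, true_and, mem_singleton]
        exact ⟨fun h => (hinj i k hj h.symm).symm, fun h => h ▸ rfl⟩
      rw [this, prod_singleton, Function.update_of_ne hj, hfg i hj]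
  rw [← prod_fiberwise univ φ f]
  simp only [hfibre]
  rw [prod_update_of_mem (mem_univ _), prod_eq_mul_prod_sdiff_singleton_of_mem (mem_univ (φ a)) g,
    ← hc, mul_right_comm, mul_comm]

section LabelWeight

variable {M : Type*} (q q₁ q₂ : M)

-- `m₁`, `m₂`: the cluster meets `b₁`, resp. `b₂`.
noncomputable def labelWeight (m₁ m₂ : Prop) : M :=
  if m₁ then q₁ else if m₂ then q₂ else q

-- The `Q` of `Qval` for two distinct clusters labelled `(m₁, m₂)` and `(n₁, n₂)`.
noncomputable def mergeFactor (m₁ m₂ n₁ n₂ : Prop) : M :=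
  if m₁ ∧ n₁ then q₁
  else if (¬m₁ ∧ m₂ ∧ (n₁ ∨ n₂)) ∨ (¬n₁ ∧ n₂ ∧ (m₁ ∨ m₂)) then q₂
  else q

theorem labelWeight_or_mul_mergeFactor [CommMonoid M] (m₁ m₂ n₁ n₂ : Prop) :
    labelWeight q q₁ q₂ (m₁ ∨ n₁) (m₂ ∨ n₂) * mergeFactor q q₁ q₂ m₁ m₂ n₁ n₂ =
      labelWeight q q₁ q₂ m₁ m₂ * labelWeight q q₁ q₂ n₁ n₂ := by
  unfold labelWeight mergeFactor
  by_cases m₁ <;> by_cases m₂ <;> by_cases n₁ <;> by_cases n₂ <;> simp [*, mul_comm]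

variable {q q₁ q₂}

theorem mergeFactor_eq_max [LinearOrder M] (h₁₂ : q₁ ≤ q₂) (h₂ : q₂ ≤ q) (m₁ m₂ n₁ n₂ : Prop) :
    mergeFactor q q₁ q₂ m₁ m₂ n₁ n₂ = max (labelWeight q q₁ q₂ m₁ m₂) (labelWeight q q₁ q₂ n₁ n₂) := by
  unfold labelWeight mergeFactor
  by_cases m₁ <;> by_cases m₂ <;> by_cases n₁ <;> by_cases n₂ <;> simp [*, h₁₂.trans h₂]

theorem labelWeight_anti [Preorder M] (h₁₂ : q₁ ≤ q₂) (h₂ : q₂ ≤ q) {m₁ m₂ m₁' m₂' : Prop}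
    (h₁ : m₁ → m₁') (h₂' : m₂ → m₂') :
    labelWeight q q₁ q₂ m₁' m₂' ≤ labelWeight q q₁ q₂ m₁ m₂ := by
  unfold labelWeight
  by_cases m₁ <;> by_cases m₂ <;> by_cases m₁' <;> by_cases m₂' <;> simp_all [h₁₂.trans h₂]

theorem prod_labelWeight [CommMonoid M] {ι : Type*} [Fintype ι] (P₁ P₂ : ι → Prop) :
    ∏ i, labelWeight q q₁ q₂ (P₁ i) (P₂ i) =
      q ^ Nat.card {i // ¬(P₁ i ∨ P₂ i)} * q₁ ^ Nat.card {i // P₁ i} *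
        q₂ ^ Nat.card {i // P₂ i ∧ ¬P₁ i} := by
  unfold labelWeight
  simp only [Finset.prod_ite, Finset.prod_const, Nat.card_eq_fintype_card, Fintype.card_subtype,
    Finset.filter_filter, not_or]
  rw [mul_comm (q ^ _), mul_assoc, mul_comm (q ^ _)]
  simp only [and_comm]

end LabelWeight

namespace SimpleGraph

variable {V : Type*} {H : SimpleGraph V} {x y u v : V}

theorem reachable_sup_edge : (H ⊔ edge x y).Reachable x y := by
  by_cases hxy : x = y
  · exact hxy ▸ Reachable.refl x
  · exact Adj.reachable (Or.inr ((edge_adj ..).2 ⟨Or.inl ⟨rfl, rfl⟩, hxy⟩))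

theorem reachable_sup_edge_iff :
    (H ⊔ edge x y).Reachable u v ↔
      H.Reachable u v ∨ (H.Reachable u x ∧ H.Reachable y v) ∨
        (H.Reachable u y ∧ H.Reachable x v) := by
  constructor
  · rintro ⟨w⟩
    induction w with
    | nil => exact Or.inl .rfl
    | cons hab _ ih =>
      rcases hab with hab | hab
      · have hab := hab.reachable
        exact ih.imp hab.trans (Or.imp (And.imp_left hab.trans) (And.imp_left hab.trans))
      · obtain ⟨⟨rfl, rfl⟩ | ⟨rfl, rfl⟩, -⟩ := (edge_adj ..).1 hab
        · rcases ih with h | h | h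
          exacts [Or.inr (Or.inl ⟨.rfl, h⟩), Or.inl (h.1.symm.trans h.2), Or.inl h.2]
        · rcases ih with h | h | h
          exacts [Or.inr (Or.inr ⟨.rfl, h⟩), Or.inl h.2, Or.inl (h.1.symm.trans h.2)]
  · have hle : H ≤ H ⊔ edge x y := le_sup_left
    have hxy : (H ⊔ edge x y).Reachable x y := reachable_sup_edge
    rintro (h | ⟨hux, hyv⟩ | ⟨huy, hxv⟩)
    · exact h.mono hle
    · exact (hux.mono hle).trans (hxy.trans (hyv.mono hle))
    · exact (huy.mono hle).trans (hxy.symm.trans (hxv.mono hle))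

theorem reachable_sup_edge_iff_of_reachable (hxy : H.Reachable x y) :
    (H ⊔ edge x y).Reachable u v ↔ H.Reachable u v := by
  rw [reachable_sup_edge_iff]
  refine ⟨?_, Or.inl⟩
  rintro (h | ⟨hux, hyv⟩ | ⟨huy, hxv⟩)
  exacts [h, hux.trans (hxy.trans hyv), huy.trans (hxy.symm.trans hxv)]

theorem reachable_sup_edge_iff_of_not_reachable (hux : ¬H.Reachable u x) (huy : ¬H.Reachable u y) :
    (H ⊔ edge x y).Reachable v u ↔ H.Reachable v u := by
  rw [reachable_comm, reachable_sup_edge_iff, H.reachable_comm]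
  simp [hux, huy]

theorem reachable_sup_edge_endpoint_iff :
    (H ⊔ edge x y).Reachable u x ↔ H.Reachable u x ∨ H.Reachable u y := by
  rw [reachable_sup_edge_iff]
  refine ⟨?_, Or.imp_right fun h => Or.inr ⟨h, .rfl⟩⟩
  rintro (h | ⟨h, -⟩ | ⟨h, -⟩)
  exacts [Or.inl h, Or.inl h, Or.inr h]

end SimpleGraph

open SimpleGraph

section ClusterWeight

variable {V M : Type*} (q q₁ q₂ : M) (b₁ b₂ : Set V)

noncomputable def clusterWeight (H : SimpleGraph V) (C : H.ConnectedComponent) : M :=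
  labelWeight q q₁ q₂ (∃ v ∈ b₁, H.connectedComponentMk v = C)
    (∃ v ∈ b₂, H.connectedComponentMk v = C)

theorem clusterWeight_connectedComponentMk (H : SimpleGraph V) (u : V) :
    clusterWeight q q₁ q₂ b₁ b₂ H (H.connectedComponentMk u) =
      labelWeight q q₁ q₂ (∃ v ∈ b₁, H.Reachable v u) (∃ v ∈ b₂, H.Reachable v u) := by
  simp only [clusterWeight, ConnectedComponent.eq]

end ClusterWeight

section ClusterProduct

variable {V M : Type*} [Fintype V] [DecidableEq V] [CommMonoid M] (q q₁ q₂ : M) (b₁ b₂ : Set V)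

theorem prod_clusterWeight_eq_prod_sup_edge_mul (H : SimpleGraph V) (x y : V) :
    ∏ C, clusterWeight q q₁ q₂ b₁ b₂ H C =
      (∏ C, clusterWeight q q₁ q₂ b₁ b₂ (H ⊔ edge x y) C) *
        if H.Reachable x y then 1
        else mergeFactor q q₁ q₂ (∃ v ∈ b₁, H.Reachable v x) (∃ v ∈ b₂, H.Reachable v x)
          (∃ v ∈ b₁, H.Reachable v y) (∃ v ∈ b₂, H.Reachable v y) := by
  set φ := ConnectedComponent.map (Hom.ofLE (le_sup_left : H ≤ H ⊔ edge x y))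
  split_ifs with hxy
  · rw [mul_one]
    refine Fintype.prod_bijective φ ⟨?_, ConnectedComponent.surjective_map_ofLE _⟩ _ _ ?_
    · refine ConnectedComponent.ind₂ fun u v h => ?_
      simp only [φ, ConnectedComponent.map_mk, Hom.ofLE_apply, ConnectedComponent.eq,
        reachable_sup_edge_iff_of_reachable hxy] at h ⊢
      exact h
    · refine ConnectedComponent.ind fun u => ?_
      simp only [φ, ConnectedComponent.map_mk, Hom.ofLE_apply, clusterWeight_connectedComponentMk,
        reachable_sup_edge_iff_of_reachable hxy]
  refine Finset.prod_eq_prod_mul_of_merge φ (ConnectedComponent.surjective_map_ofLE _)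
    (a := H.connectedComponentMk x) (b := H.connectedComponentMk y)
    (mt ConnectedComponent.eq.1 hxy) ?_ ?_ ?_ ?_
  · refine ConnectedComponent.ind fun u => ?_
    simp only [φ, ConnectedComponent.map_mk, Hom.ofLE_apply, ConnectedComponent.eq]
    exact reachable_sup_edge_endpoint_iff
  · refine ConnectedComponent.ind₂ fun u v hu huv => ?_
    simp only [φ, ConnectedComponent.map_mk, Hom.ofLE_apply, ne_eq, ConnectedComponent.eq,
      reachable_sup_edge_endpoint_iff, not_or] at hu huv ⊢
    exact ((reachable_sup_edge_iff_of_not_reachable hu.1 hu.2).1 huv.symm).symm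
  · refine ConnectedComponent.ind fun u hu => ?_
    simp only [φ, ConnectedComponent.map_mk, Hom.ofLE_apply, ne_eq, ConnectedComponent.eq,
      reachable_sup_edge_endpoint_iff, not_or] at hu ⊢
    simp only [clusterWeight_connectedComponentMk,
      reachable_sup_edge_iff_of_not_reachable hu.1 hu.2]
  · simp only [φ, ConnectedComponent.map_mk, Hom.ofLE_apply, clusterWeight_connectedComponentMk,
      reachable_sup_edge_endpoint_iff, and_or_left, exists_or]
    exact labelWeight_or_mul_mergeFactor ..

end ClusterProduct

theorem openGraph_insert {V : Type*} [DecidableEq V] {G : SimpleGraph V} {x y : V}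
    (hxy : G.Adj x y) (η : Finset (Sym2 V)) :
    openGraph G (insert s(x, y) η) = openGraph G η ⊔ edge x y := by
  rw [openGraph, openGraph, edge, ← fromEdgeSet_union]
  congr 1
  ext e
  simp only [Finset.coe_insert, Set.mem_inter_iff, Set.mem_insert_iff, Set.mem_union,
    Set.mem_singleton_iff, Finset.mem_coe]
  constructor
  · rintro ⟨rfl | h, hE⟩
    exacts [Or.inr rfl, Or.inl ⟨h, hE⟩]
  · rintro (h | rfl)
    exacts [⟨Or.inr h.1, h.2⟩, ⟨Or.inl rfl, hxy⟩]

variable {V : Type*} [Fintype V] [DecidableEq V]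

theorem pow_kappa_eq_prod_clusterWeight (G : SimpleGraph V) (q q₁ q₂ : ℝ) (b₁ b₂ : Set V)
    (ω : Finset (Sym2 V)) :
    q ^ kappaI G ω b₁ b₂ * q₁ ^ kappaB G ω b₁ * q₂ ^ kappaB2 G ω b₁ b₂ =
      ∏ C, clusterWeight q q₁ q₂ b₁ b₂ (openGraph G ω) C := by
  simp only [clusterWeight, prod_labelWeight, kappaI, kappaB, kappaB2, Set.mem_union,
    or_and_right, exists_or]

theorem Qval_eq_ite (G : SimpleGraph V) (q q₁ q₂ : ℝ) (b₁ b₂ : Set V) (η : Finset (Sym2 V))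
    (x y : V) :
    Qval G q q₁ q₂ b₁ b₂ η x y =
      if (openGraph G η).Reachable x y then 1
      else mergeFactor q q₁ q₂ (∃ v ∈ b₁, (openGraph G η).Reachable v x)
        (∃ v ∈ b₂, (openGraph G η).Reachable v x) (∃ v ∈ b₁, (openGraph G η).Reachable v y)
        (∃ v ∈ b₂, (openGraph G η).Reachable v y) := by
  have hcomm (b : Set V) (z : V) :
      (∃ v ∈ b, (openGraph G η).Reachable z v) ↔ ∃ v ∈ b, (openGraph G η).Reachable v z :=
    exists_congr fun _ => and_congr_right' reachable_comm
  simp only [Qval, mergeFactor, Set.mem_union, or_and_right, exists_or, hcomm]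
  -- the two sides differ only in their `Decidable` instances
  congr

theorem pow_kappa_insert_mul_Qval (G : SimpleGraph V) (q q₁ q₂ : ℝ) (b₁ b₂ : Set V)
    (η : Finset (Sym2 V)) {x y : V} (hxy : G.Adj x y) :
    q ^ kappaI G (insert s(x, y) η) b₁ b₂ * q₁ ^ kappaB G (insert s(x, y) η) b₁ *
        q₂ ^ kappaB2 G (insert s(x, y) η) b₁ b₂ * Qval G q q₁ q₂ b₁ b₂ η x y =
      q ^ kappaI G η b₁ b₂ * q₁ ^ kappaB G η b₁ * q₂ ^ kappaB2 G η b₁ b₂ := by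
  rw [pow_kappa_eq_prod_clusterWeight, pow_kappa_eq_prod_clusterWeight, Qval_eq_ite,
    openGraph_insert hxy]
  -- `convert` reconciles two `Fintype` instances on the components of `openGraph G η ⊔ edge x y`
  convert (prod_clusterWeight_eq_prod_sup_edge_mul q q₁ q₂ b₁ b₂ (openGraph G η) x y).symm

section Weight

variable (G : SimpleGraph V) [DecidableRel G.Adj] {p q q₁ q₂ : ℝ} (b₁ b₂ : Set V)
  {η : Finset (Sym2 V)} {x y : V}

theorem card_insert_inter_edgeFinset (hxy : G.Adj x y) (hη : s(x, y) ∉ η) :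
    (insert s(x, y) η ∩ G.edgeFinset).card = (η ∩ G.edgeFinset).card + 1 := by
  rw [Finset.insert_inter_of_mem (mem_edgeFinset.mpr hxy)]
  exact Finset.card_insert_of_notMem fun h => hη (Finset.mem_inter.mp h).1

theorem card_edgeFinset_sdiff_insert (hxy : G.Adj x y) (hη : s(x, y) ∉ η) :
    (G.edgeFinset \ insert s(x, y) η).card + 1 = (G.edgeFinset \ η).card := by
  rw [Finset.sdiff_insert]
  exact Finset.card_erase_add_one (Finset.mem_sdiff.mpr ⟨mem_edgeFinset.mpr hxy, hη⟩)

theorem qFKweight_mul_eq (hxy : G.Adj x y) (hη : s(x, y) ∉ η) :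
    qFKweight G p q q₁ q₂ b₁ b₂ η * p =
      qFKweight G p q q₁ q₂ b₁ b₂ (insert s(x, y) η) * ((1 - p) * Qval G q q₁ q₂ b₁ b₂ η x y) := by
  have hκ := pow_kappa_insert_mul_Qval G q q₁ q₂ b₁ b₂ η hxy
  unfold qFKweight
  rw [card_insert_inter_edgeFinset G hxy hη, ← card_edgeFinset_sdiff_insert G hxy hη, pow_succ,
    pow_succ]
  linear_combination (-(p ^ (η ∩ G.edgeFinset).card * p *
    ((1 - p) ^ (G.edgeFinset \ insert s(x, y) η).card * (1 - p)))) * hκ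

theorem qFKweight_pos (hp : 0 < p) (hp1 : p < 1) (hq : 0 < q) (hq₁ : 0 < q₁) (hq₂ : 0 < q₂)
    (ω : Finset (Sym2 V)) : 0 < qFKweight G p q q₁ q₂ b₁ b₂ ω := by
  have : 0 < 1 - p := sub_pos.mpr hp1
  unfold qFKweight
  positivity

theorem condOpenProb_eq (hxy : G.Adj x y) (hη : s(x, y) ∉ η) (hp : p ≠ 0)
    (hW : qFKweight G p q q₁ q₂ b₁ b₂ (insert s(x, y) η) ≠ 0) :
    condOpenProb G p q q₁ q₂ b₁ b₂ η x y = p / (p + (1 - p) * Qval G q q₁ q₂ b₁ b₂ η x y) := by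
  have hsum : qFKweight G p q q₁ q₂ b₁ b₂ (insert s(x, y) η) + qFKweight G p q q₁ q₂ b₁ b₂ η =
      qFKweight G p q q₁ q₂ b₁ b₂ (insert s(x, y) η) *
        ((p + (1 - p) * Qval G q q₁ q₂ b₁ b₂ η x y) / p) := by
    field_simp
    linear_combination qFKweight_mul_eq G b₁ b₂ hxy hη
  rw [condOpenProb, hsum, div_mul_cancel_left₀ hW, inv_div]

end Weight

section Monotone

variable {G : SimpleGraph V} {q q₁ q₂ : ℝ} {b₁ b₂ : Set V}

theorem Qval_eq_max (h₁₂ : q₁ ≤ q₂) (h₂ : q₂ ≤ q) (η : Finset (Sym2 V)) (x y : V) :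
    Qval G q q₁ q₂ b₁ b₂ η x y =
      if (openGraph G η).Reachable x y then 1
      else max
        (labelWeight q q₁ q₂ (∃ v ∈ b₁, (openGraph G η).Reachable v x)
          (∃ v ∈ b₂, (openGraph G η).Reachable v x))
        (labelWeight q q₁ q₂ (∃ v ∈ b₁, (openGraph G η).Reachable v y)
          (∃ v ∈ b₂, (openGraph G η).Reachable v y)) := by
  rw [Qval_eq_ite, mergeFactor_eq_max h₁₂ h₂]

theorem one_le_Qval (h₁ : 1 ≤ q₁) (h₁₂ : q₁ ≤ q₂) (h₂ : q₂ ≤ q) (η : Finset (Sym2 V)) (x y : V) :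
    1 ≤ Qval G q q₁ q₂ b₁ b₂ η x y := by
  unfold Qval
  split_ifs <;> linarith

theorem Qval_le_of_subset (h₁ : 1 ≤ q₁) (h₁₂ : q₁ ≤ q₂) (h₂ : q₂ ≤ q) {η η' : Finset (Sym2 V)}
    (hηη' : η ⊆ η') (x y : V) :
    Qval G q q₁ q₂ b₁ b₂ η' x y ≤ Qval G q q₁ q₂ b₁ b₂ η x y := by
  have hle : openGraph G η ≤ openGraph G η' :=
    fromEdgeSet_mono (Set.inter_subset_inter_left _ (Finset.coe_subset.2 hηη'))
  by_cases hxy' : (openGraph G η').Reachable x y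
  · rw [Qval_eq_ite, if_pos hxy']
    exact one_le_Qval h₁ h₁₂ h₂ η x y
  have hxy : ¬(openGraph G η).Reachable x y := fun h => hxy' (h.mono hle)
  have hmono (b : Set V) (z : V) :
      (∃ v ∈ b, (openGraph G η).Reachable v z) → ∃ v ∈ b, (openGraph G η').Reachable v z :=
    fun ⟨v, hv, h⟩ => ⟨v, hv, h.mono hle⟩
  rw [Qval_eq_max h₁₂ h₂, Qval_eq_max h₁₂ h₂, if_neg hxy', if_neg hxy]
  exact max_le_max (labelWeight_anti h₁₂ h₂ (hmono _ _) (hmono _ _))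
    (labelWeight_anti h₁₂ h₂ (hmono _ _) (hmono _ _))

end Monotone

theorem qFK_conditional_single_edge_general (G : SimpleGraph V) [DecidableRel G.Adj]
    (p q q₁ q₂ : ℝ) (hp : 0 < p) (hp1 : p < 1)
    (hq₁ : 1 ≤ q₁) (hq₁₂ : q₁ ≤ q₂) (hq₂ : q₂ ≤ q)
    (b₁ b₂ : Set V)
    (x y : V) (hxy : G.Adj x y) :
    (∀ η : Finset (Sym2 V), s(x, y) ∉ η →
      condOpenProb G p q q₁ q₂ b₁ b₂ η x y
        = p / (p + (1 - p) * Qval G q q₁ q₂ b₁ b₂ η x y)) ∧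
    (∀ η η' : Finset (Sym2 V), s(x, y) ∉ η → s(x, y) ∉ η' → η ⊆ η' →
      condOpenProb G p q q₁ q₂ b₁ b₂ η x y ≤ condOpenProb G p q q₁ q₂ b₁ b₂ η' x y) := by
  have hcond (η : Finset (Sym2 V)) (hη : s(x, y) ∉ η) :
      condOpenProb G p q q₁ q₂ b₁ b₂ η x y = p / (p + (1 - p) * Qval G q q₁ q₂ b₁ b₂ η x y) :=
    condOpenProb_eq G b₁ b₂ hxy hη hp.ne'
      (qFKweight_pos G b₁ b₂ hp hp1 (by linarith) (by linarith) (by linarith) _).ne'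
  refine ⟨hcond, fun η η' hη hη' hηη' => ?_⟩
  rw [hcond η hη, hcond η' hη']
  have hQ := Qval_le_of_subset (G := G) (b₁ := b₁) (b₂ := b₂) hq₁ hq₁₂ hq₂ hηη' x y
  have hQ' := one_le_Qval (G := G) (b₁ := b₁) (b₂ := b₂) hq₁ hq₁₂ hq₂ η' x y
  exact div_le_div_of_nonneg_left hp.le (by positivity) (by gcongr)

/-- Single-edge conditional probabilities of the quasi-FK measure: for an edge
`e = xy` and a configuration `η` off `e`, the conditional probability that `e`
is open equals `p / (p + (1−p) Q)` with `Q` as in `Qval`; in particular it is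
nondecreasing in `η` when `1 ≤ q₁ ≤ q₂ ≤ q`. -/
theorem qFK_conditional_single_edge (G : SimpleGraph V) [DecidableRel G.Adj]
    (p q q₁ q₂ : ℝ) (hp : 0 < p) (hp1 : p < 1)
    (hq₁ : 1 ≤ q₁) (hq₁₂ : q₁ ≤ q₂) (hq₂ : q₂ ≤ q)
    (b₁ b₂ : Set V) (hdisj : Disjoint b₁ b₂)
    (x y : V) (hxy : G.Adj x y) :
    (∀ η : Finset (Sym2 V), s(x, y) ∉ η →
      condOpenProb G p q q₁ q₂ b₁ b₂ η x y
        = p / (p + (1 - p) * Qval G q q₁ q₂ b₁ b₂ η x y)) ∧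
    (∀ η η' : Finset (Sym2 V), s(x, y) ∉ η → s(x, y) ∉ η' → η ⊆ η' →
      condOpenProb G p q q₁ q₂ b₁ b₂ η x y ≤ condOpenProb G p q q₁ q₂ b₁ b₂ η' x y) :=
  qFK_conditional_single_edge_general G p q q₁ q₂ hp hp1 hq₁ hq₁₂ hq₂ b₁ b₂ x y hxy
end
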